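/- If D = {β₁,...,β_l} is a minimal dominating set of Γ(V_α), then l ≤ n = dim V. Thus the maximum cardinality of a minimal dominating set of Γ(V_α) equals n. -/

import Mathlib

/-- The non-zero component graph of a vector space `V` with respect to a basis `b`:
vertices are the non-zero vectors, and two distinct vectors are adjacent iff they have a
common basis vector with non-zero coefficient in their basis representations. -/
def NZCG {F V : Type*} [Field F] [AddCommGroup V] [Module F V] {n : ℕ}
    (b : Module.Basis (Fin n) F V) : SimpleGraph {v : V // v ≠ 0} where
  Adj x y := x ≠ y ∧ ∃ i, b.repr x.1 i ≠ 0 ∧ b.repr y.1 i ≠ 0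
  symm := by
    constructor
    rintro x y ⟨hxy, i, h1, h2⟩
    exact ⟨hxy.symm, i, h2, h1⟩
  loopless := by
    constructor
    rintro x ⟨h, _⟩
    exact h rfl

/-- `D` is a dominating set of `G`: every vertex outside `D` is adjacent to a vertex of `D`. -/
def IsDominatingSet {α : Type*} (G : SimpleGraph α) (D : Set α) : Prop :=
  ∀ v ∉ D, ∃ u ∈ D, G.Adj u v

/-!
A vertex of a minimal dominating set `D` has a private neighbour, a vertex of its closed
neighbourhood lying in no other closed neighbourhood of `D`. In `NZCG b` two vertices lie in each
other's closed neighbourhood iff their supports meet, so every `β ∈ D` owns a private coordinate: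
one that is non-zero for `β` and zero for every other member of `D`. This injects `D` into
`Fin n`. Conversely, the basis vectors are pairwise non-adjacent and every non-zero vector shares
a coordinate with one of them, so they form a minimal dominating set of size `n`.
-/

theorem IsDominatingSet.exists_private_neighbor {α : Type*} {G : SimpleGraph α} {D : Set α}
    (hdom : IsDominatingSet G D) (hmin : ∀ D' ⊂ D, ¬ IsDominatingSet G D') {x : α}
    (hx : x ∈ D) : ∃ v, (x = v ∨ G.Adj x v) ∧ ∀ u ∈ D, (u = v ∨ G.Adj u v) → u = x := by
  obtain ⟨v, hv, hv_undominated⟩ : ∃ v ∉ D \ {x}, ∀ u ∈ D \ {x}, ¬ G.Adj u v := by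
    simpa [IsDominatingSet] using hmin _ (Set.sdiff_singleton_ssubset.mpr hx)
  have hv_private : ∀ u ∈ D, G.Adj u v → u = x := fun u hu hadj =>
    by_contra fun hux => hv_undominated u ⟨hu, hux⟩ hadj
  by_cases hvD : v ∈ D
  · have hvx : v = x := by_contra fun hvx => hv ⟨hvD, hvx⟩
    subst hvx
    exact ⟨v, .inl rfl, fun u hu h => h.elim id (hv_private u hu)⟩
  · obtain ⟨u, hu, hadj⟩ := hdom v hvD
    obtain rfl := hv_private u hu hadj
    exact ⟨v, .inr hadj, fun w hw h =>
      h.elim (fun hwv => (hvD (hwv ▸ hw)).elim) (hv_private w hw)⟩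

theorem SimpleGraph.IsIndepSet.not_isDominatingSet_of_ssubset {α : Type*} {G : SimpleGraph α}
    {D D' : Set α} (hD : G.IsIndepSet D) (hD' : D' ⊂ D) : ¬ IsDominatingSet G D' := by
  intro hdom
  obtain ⟨x, hxD, hxD'⟩ := Set.exists_of_ssubset hD'
  obtain ⟨u, hu, hadj⟩ := hdom x hxD'
  exact hD (hD'.subset hu) hxD hadj.ne hadj

theorem Set.finite_and_ncard_le_of_exists_private {α ι : Type*} [Finite ι] {D : Set α}
    (p : α → ι → Prop) (h : ∀ x ∈ D, ∃ i, p x i ∧ ∀ y ∈ D, p y i → y = x) :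
    D.Finite ∧ D.ncard ≤ Nat.card ι := by
  choose f hf using fun x : D => h x x.2
  have hinj : Function.Injective f := fun x y hxy =>
    Subtype.ext ((hf y).2 x x.2 (hxy ▸ (hf x).1))
  have : Finite D := Finite.of_injective f hinj
  exact ⟨D.toFinite, Nat.card_coe_set_eq D ▸ Nat.card_le_card_of_injective f hinj⟩

namespace NZCG

variable {F V : Type*} [Field F] [AddCommGroup V] [Module F V] {n : ℕ}
  (b : Module.Basis (Fin n) F V)

theorem exists_repr_ne_zero (x : {v : V // v ≠ 0}) : ∃ i, b.repr x.1 i ≠ 0 := by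
  by_contra! h
  exact x.2 (b.repr.map_eq_zero_iff.mp (Finsupp.ext h))

theorem eq_or_adj_iff (x y : {v : V // v ≠ 0}) :
    x = y ∨ (NZCG b).Adj x y ↔ ∃ i, b.repr x.1 i ≠ 0 ∧ b.repr y.1 i ≠ 0 := by
  refine ⟨?_, fun h => or_iff_not_imp_left.mpr fun hxy => ⟨hxy, h⟩⟩
  rintro (rfl | ⟨-, h⟩)
  · obtain ⟨i, hi⟩ := exists_repr_ne_zero b x
    exact ⟨i, hi, hi⟩
  · exact h

theorem exists_private_coord {D : Set {v : V // v ≠ 0}} (hdom : IsDominatingSet (NZCG b) D)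
    (hmin : ∀ D' ⊂ D, ¬ IsDominatingSet (NZCG b) D') {x : {v : V // v ≠ 0}} (hx : x ∈ D) :
    ∃ i, b.repr x.1 i ≠ 0 ∧ ∀ y ∈ D, b.repr y.1 i ≠ 0 → y = x := by
  obtain ⟨v, hxv, hv⟩ := hdom.exists_private_neighbor hmin hx
  obtain ⟨i, hxi, hvi⟩ := (eq_or_adj_iff b x v).mp hxv
  exact ⟨i, hxi, fun y hy hyi => hv y hy ((eq_or_adj_iff b y v).mpr ⟨i, hyi, hvi⟩)⟩

noncomputable def basisVertex (i : Fin n) : {v : V // v ≠ 0} := ⟨b i, b.ne_zero i⟩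

theorem basisVertex_injective : Function.Injective (basisVertex b) := fun _ _ h =>
  b.injective (congrArg Subtype.val h)

theorem repr_basisVertex_ne_zero_iff (i j : Fin n) :
    b.repr (basisVertex b i).1 j ≠ 0 ↔ j = i := by
  simp [basisVertex, Finsupp.single_apply, eq_comm]

theorem isDominatingSet_range_basisVertex :
    IsDominatingSet (NZCG b) (Set.range (basisVertex b)) := by
  intro v hv
  obtain ⟨i, hi⟩ := exists_repr_ne_zero b v
  have hclose := (eq_or_adj_iff b (basisVertex b i) v).mpr
    ⟨i, (repr_basisVertex_ne_zero_iff b i i).mpr rfl, hi⟩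
  exact ⟨_, ⟨i, rfl⟩, hclose.resolve_left fun h => hv ⟨i, h⟩⟩

theorem isIndepSet_range_basisVertex : (NZCG b).IsIndepSet (Set.range (basisVertex b)) := by
  rintro _ ⟨i, rfl⟩ _ ⟨j, rfl⟩ hne ⟨-, k, hki, hkj⟩
  rw [repr_basisVertex_ne_zero_iff] at hki hkj
  exact hne (congrArg _ (hki.symm.trans hkj))

end NZCG

theorem nzcg_minimal_dominating_card_le {F V : Type*} [Field F] [AddCommGroup V] [Module F V]
    {n : ℕ} (b : Module.Basis (Fin n) F V) :
    (∀ D : Set {v : V // v ≠ 0}, IsDominatingSet (NZCG b) D →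
        (∀ D' ⊂ D, ¬ IsDominatingSet (NZCG b) D') → D.Finite ∧ D.ncard ≤ n) ∧
      ∃ D : Set {v : V // v ≠ 0}, IsDominatingSet (NZCG b) D ∧
        (∀ D' ⊂ D, ¬ IsDominatingSet (NZCG b) D') ∧ D.ncard = n := by
  refine ⟨fun D hdom hmin => ?_, ?_⟩
  · simpa using Set.finite_and_ncard_le_of_exists_private (fun x i => b.repr x.1 i ≠ 0)
      fun x hx => NZCG.exists_private_coord b hdom hmin hx
  · refine ⟨_, NZCG.isDominatingSet_range_basisVertex b,
      fun D' => (NZCG.isIndepSet_range_basisVertex b).not_isDominatingSet_of_ssubset, ?_⟩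
    simp [Set.ncard_range_of_injective (NZCG.basisVertex_injective b)]
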